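/- arXiv:1412.5746 — 2 statements merged into one kernel-verified Lean document; each statement's English description precedes it below -/
import Mathlib

section
/- Let A be a complex Banach algebra, let K, L ∈ A with a := ‖K‖ > 0, let t ≥ 0, and assume that ‖exp(sK)‖ ≤ 1, ‖exp(sL)‖ ≤ 1 and ‖exp(s(K+L))‖ ≤ 1 for all s ∈ [0,t]. Then ‖exp(t(K+L)) − exp(tK)·exp(tL)‖ ≤ ((1 − e^{at}·(1 − at))/a²)·‖[K,L]‖. -/
open NormedSpace

/-!
Duhamel interpolation: `F s = exp((t-s)(K+L)) exp(sK) exp(sL)` runs from `exp(t(K+L))` to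
`exp(tK) exp(tL)` with `F' s = exp((t-s)(K+L)) [exp(sK), L] exp(sL)`. In the same way
`[exp(sK), L]` is the integral over `u ∈ [0,s]` of `exp(uK) [K,L] exp((s-u)K)`, so by contractivity
`‖[exp(sK), L]‖ ≤ s‖[K,L]‖`, and integrating once more gives the bound `t²/2 · ‖[K,L]‖`, which is
at most the claimed one because `x²/2 ≤ 1 - eˣ(1-x)` for `x = at ≥ 0`.
-/

theorem sq_div_two_le_one_sub_exp_mul_one_sub {x : ℝ} (hx : 0 ≤ x) :
    x ^ 2 / 2 ≤ 1 - Real.exp x * (1 - x) := by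
  set g : ℝ → ℝ := fun y => 1 - Real.exp y * (1 - y) - y ^ 2 / 2
  have hg : ∀ y, HasDerivAt g (y * (Real.exp y - 1)) y := fun y => by
    refine ((((Real.hasDerivAt_exp y).mul ((hasDerivAt_id' y).const_sub 1)).const_sub 1).sub
      ((hasDerivAt_pow 2 y).div_const 2)).congr_deriv ?_
    push_cast
    ring
  have hmono : MonotoneOn g (Set.Ici 0) :=
    monotoneOn_of_hasDerivWithinAt_nonneg (convex_Ici 0)
      (fun y _ => (hg y).continuousAt.continuousWithinAt) (fun y _ => (hg y).hasDerivWithinAt)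
      (fun y hy => by
        rw [interior_Ici] at hy
        exact mul_nonneg (le_of_lt hy) (sub_nonneg.2 (Real.one_le_exp (le_of_lt hy))))
  have := hmono Set.self_mem_Ici hx hx
  simp only [g, Real.exp_zero] at this
  linarith

theorem norm_mul_mul_le_of_norm_le_one {R : Type*} [SeminormedRing R] {x z : R} (y : R)
    (hx : ‖x‖ ≤ 1) (hz : ‖z‖ ≤ 1) : ‖x * y * z‖ ≤ ‖y‖ :=
  calc ‖x * y * z‖ ≤ ‖x‖ * ‖y‖ * ‖z‖ := norm_mul₃_le
    _ ≤ 1 * ‖y‖ * 1 := by gcongr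
    _ = ‖y‖ := by ring

theorem norm_sub_le_of_norm_deriv_le_mul {E : Type*} [NormedAddCommGroup E] [NormedSpace ℝ E]
    {f f' : ℝ → E} {C t : ℝ} (ht : 0 ≤ t) (hf : ∀ s ∈ Set.Icc 0 t, HasDerivAt f (f' s) s)
    (bound : ∀ s ∈ Set.Icc 0 t, ‖f' s‖ ≤ C * s) :
    ‖f t - f 0‖ ≤ C * (t ^ 2 / 2) := by
  refine image_norm_le_of_norm_deriv_right_le_deriv_boundary (f := fun s => f s - f 0)
    (B := fun s => C * (s ^ 2 / 2)) (B' := fun s => C * s) ?_ ?_ (by simp) (fun s => ?_)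
    (fun s hs => bound s (Set.Ico_subset_Icc_self hs)) (Set.right_mem_Icc.2 ht)
  · exact fun s hs => ((hf s hs).sub_const (f 0)).continuousAt.continuousWithinAt
  · exact fun s hs => ((hf s (Set.Ico_subset_Icc_self hs)).sub_const (f 0)).hasDerivWithinAt
  · exact (((hasDerivAt_pow 2 s).div_const 2).const_mul C).congr_deriv (by ring)

section

variable {A : Type*} [NormedRing A] [NormedAlgebra ℝ A] [CompleteSpace A]

theorem hasDerivAt_exp_sub_smul (M : A) (t s : ℝ) :
    HasDerivAt (fun u : ℝ => exp ((t - u) • M)) (-(exp ((t - s) • M) * M)) s :=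
  ((hasDerivAt_exp_smul_const M (t - s)).scomp s ((hasDerivAt_id s).const_sub t)).congr_deriv
    (neg_one_smul ℝ _)

theorem norm_exp_smul_mul_sub_mul_exp_smul_le {K : A} (L : A) {s : ℝ} (hs : 0 ≤ s)
    (hK : ∀ u ∈ Set.Icc 0 s, ‖exp (u • K)‖ ≤ 1) :
    ‖exp (s • K) * L - L * exp (s • K)‖ ≤ s * ‖K * L - L * K‖ := by
  set g : ℝ → A := fun u => exp (u • K) * L * exp ((s - u) • K)
  have hg : ∀ u, HasDerivAt g (exp (u • K) * (K * L - L * K) * exp ((s - u) • K)) u := by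
    intro u
    refine (((hasDerivAt_exp_smul_const K u).mul_const L).mul
      (hasDerivAt_exp_sub_smul K s u)).congr_deriv ?_
    rw [((Commute.refl K).smul_left (s - u)).exp_left.eq]
    noncomm_ring
  have hbound : ∀ u ∈ Set.Icc 0 s,
      ‖exp (u • K) * (K * L - L * K) * exp ((s - u) • K)‖ ≤ ‖K * L - L * K‖ :=
    fun u hu => norm_mul_mul_le_of_norm_le_one _ (hK u hu)
      (hK (s - u) ⟨by linarith [hu.2], by linarith [hu.1]⟩)
  have := (convex_Icc 0 s).norm_image_sub_le_of_norm_hasDerivWithin_le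
    (fun u _ => (hg u).hasDerivWithinAt) hbound (Set.left_mem_Icc.2 hs) (Set.right_mem_Icc.2 hs)
  simpa [g, abs_of_nonneg hs, mul_comm] using this

theorem norm_exp_smul_add_sub_exp_smul_mul_exp_smul_le {K L : A} {t : ℝ} (ht : 0 ≤ t)
    (hK : ∀ s ∈ Set.Icc 0 t, ‖exp (s • K)‖ ≤ 1) (hL : ∀ s ∈ Set.Icc 0 t, ‖exp (s • L)‖ ≤ 1)
    (hKL : ∀ s ∈ Set.Icc 0 t, ‖exp (s • (K + L))‖ ≤ 1) :
    ‖exp (t • (K + L)) - exp (t • K) * exp (t • L)‖ ≤ ‖K * L - L * K‖ * (t ^ 2 / 2) := by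
  set F : ℝ → A := fun s => exp ((t - s) • (K + L)) * (exp (s • K) * exp (s • L))
  set F' : ℝ → A := fun s =>
    exp ((t - s) • (K + L)) * (exp (s • K) * L - L * exp (s • K)) * exp (s • L)
  have hF : ∀ s, HasDerivAt F (F' s) s := by
    intro s
    refine ((hasDerivAt_exp_sub_smul (K + L) t s).mul
      ((hasDerivAt_exp_smul_const' K s).mul (hasDerivAt_exp_smul_const' L s))).congr_deriv ?_
    simp only [F', Pi.mul_apply]
    noncomm_ring
  have hbound : ∀ s ∈ Set.Icc 0 t, ‖F' s‖ ≤ ‖K * L - L * K‖ * s := by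
    intro s hs
    have hts : t - s ∈ Set.Icc 0 t := ⟨by linarith [hs.2], by linarith [hs.1]⟩
    calc ‖F' s‖ ≤ ‖exp (s • K) * L - L * exp (s • K)‖ :=
          norm_mul_mul_le_of_norm_le_one _ (hKL _ hts) (hL s hs)
      _ ≤ ‖K * L - L * K‖ * s := by
          rw [mul_comm]
          exact norm_exp_smul_mul_sub_mul_exp_smul_le L hs.1
            fun u hu => hK u ⟨hu.1, hu.2.trans hs.2⟩
  have := norm_sub_le_of_norm_deriv_le_mul ht (fun s _ => hF s) hbound
  simpa only [F, sub_self, sub_zero, zero_smul, exp_zero, one_mul, mul_one, norm_sub_rev]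
    using this

end

theorem trotter_first_order_intermediate_bound_general {A : Type*} [NormedRing A]
    [NormedAlgebra ℂ A] [CompleteSpace A] (K L : A) (a : ℝ)
    (ha' : 0 < a) (t : ℝ) (ht : 0 ≤ t)
    (hK : ∀ s ∈ Set.Icc (0:ℝ) t, ‖exp (s • K)‖ ≤ 1)
    (hL : ∀ s ∈ Set.Icc (0:ℝ) t, ‖exp (s • L)‖ ≤ 1)
    (hKL : ∀ s ∈ Set.Icc (0:ℝ) t, ‖exp (s • (K + L))‖ ≤ 1) :
    ‖exp (t • (K + L)) - exp (t • K) * exp (t • L)‖ ≤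
      (1 - Real.exp (a * t) * (1 - a * t)) / a ^ 2 * ‖K * L - L * K‖ := by
  have hquad : t ^ 2 / 2 ≤ (1 - Real.exp (a * t) * (1 - a * t)) / a ^ 2 := by
    rw [le_div_iff₀ (by positivity)]
    linarith [sq_div_two_le_one_sub_exp_mul_one_sub (mul_nonneg ha'.le ht), mul_pow a t 2]
  calc _ ≤ ‖K * L - L * K‖ * (t ^ 2 / 2) :=
        norm_exp_smul_add_sub_exp_smul_mul_exp_smul_le ht hK hL hKL
    _ ≤ _ := by rw [mul_comm]; gcongr

/-- **Intermediate first-order Trotter–Suzuki bound** (proof of Lemma 3).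
If `K, L` are elements of a complex Banach algebra with `a := ‖K‖ > 0` whose
exponentials `exp(sK)`, `exp(sL)`, `exp(s(K+L))` are contractions for all
`s ∈ [0,t]`, then
`‖exp(t(K+L)) − exp(tK)·exp(tL)‖ ≤ ((1 − e^{at}(1 − at))/a²)·‖[K,L]‖`. -/
theorem trotter_first_order_intermediate_bound {A : Type*} [NormedRing A]
    [NormedAlgebra ℂ A] [CompleteSpace A] (K L : A) (a : ℝ) (ha : a = ‖K‖)
    (ha' : 0 < a) (t : ℝ) (ht : 0 ≤ t)
    (hK : ∀ s ∈ Set.Icc (0:ℝ) t, ‖exp (s • K)‖ ≤ 1)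
    (hL : ∀ s ∈ Set.Icc (0:ℝ) t, ‖exp (s • L)‖ ≤ 1)
    (hKL : ∀ s ∈ Set.Icc (0:ℝ) t, ‖exp (s • (K + L))‖ ≤ 1) :
    ‖exp (t • (K + L)) - exp (t • K) * exp (t • L)‖ ≤
      (1 - Real.exp (a * t) * (1 - a * t)) / a ^ 2 * ‖K * L - L * K‖ :=
  trotter_first_order_intermediate_bound_general K L a ha' t ht hK hL hKL
end

section
/- Let A be a complex Banach algebra, let N ≥ 2, and let K₁, …, K_{N−1} ∈ A satisfy ‖Kₗ‖ ≤ b for all l and [Kᵢ, Kⱼ] = 0 whenever |i − j| ≥ 2. Define O := Σ_{l odd} Kₗ and E := Σ_{l even} Kₗ (sums over 1 ≤ l ≤ N−1), and let τ ≥ 0 satisfy τ·(‖E‖ + ‖O‖/2) ≤ 1. Assume ‖exp(sO)‖ ≤ 1, ‖exp(sE)‖ ≤ 1 and ‖exp(s(O+E))‖ ≤ 1 for all s ∈ [0,τ]. Then the one-step second-order Trotter–Suzuki error satisfies ‖exp(τ(O+E)) − exp((τ/2)O)·exp(τE)·exp((τ/2)O)‖ ≤ τ³·N²·b³/2. -/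
/-!
Write `X = O/2`, `Y = E` and `P t = e^{tX} e^{tY} e^{tX}`. Then `P' = (2X + Y) P + G` where the
defect `G t = [e^{tX}, Y] e^{tY} e^{tX} + e^{tX} [e^{tY}, X] e^{tX}` is, by the mean value
inequality along `s ↦ e^{sX} Y e^{(t-s)X}` and its analogue, controlled by conjugates of `±[X, Y]`
by contractive exponentials. Each exponential is within `s‖X‖` of `1`, so the two conjugates
cancel up to `O(t)` and `‖G t‖ ≤ 2‖[X, Y]‖(‖X‖ + ‖Y‖) t²`. Differentiating
`e^{(τ-t)(2X+Y)} P t` (Duhamel) then bounds the Trotter error by `∫₀^τ 2‖[X, Y]‖(‖X‖ + ‖Y‖) t² dt`.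
For the chain, only adjacent odd/even terms fail to commute, so `‖[O, E]‖ ≤ 2(N-2)b²`, and
counting sites gives `‖E‖ + ‖O‖/2 ≤ 3(N-1)b/4`.
-/

open NormedSpace

theorem norm_sub_le_of_norm_hasDerivAt_le_mul_pow {E : Type*} [NormedAddCommGroup E]
    [NormedSpace ℝ E] {f f' : ℝ → E} {τ C : ℝ} (n : ℕ) (hτ : 0 ≤ τ)
    (hf : ∀ t ∈ Set.Icc 0 τ, HasDerivAt f (f' t) t)
    (bound : ∀ t ∈ Set.Icc 0 τ, ‖f' t‖ ≤ C * t ^ n) :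
    ‖f τ - f 0‖ ≤ C * τ ^ (n + 1) / (n + 1) := by
  have hB (t : ℝ) : HasDerivAt (fun t => C * t ^ (n + 1) / (n + 1)) (C * t ^ n) t := by
    refine (((hasDerivAt_pow (n + 1) t).const_mul C).div_const ((n : ℝ) + 1)).congr_deriv ?_
    rw [Nat.add_sub_cancel]
    push_cast
    field_simp
  refine image_norm_le_of_norm_deriv_right_le_deriv_boundary (f := fun t => f t - f 0)
    (fun t ht => ((hf t ht).sub_const _).continuousAt.continuousWithinAt)
    (fun t ht => ((hf t (Set.Ico_subset_Icc_self ht)).sub_const _).hasDerivWithinAt)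
    (by simp) hB (fun t ht => bound t (Set.Ico_subset_Icc_self ht)) (Set.right_mem_Icc.2 hτ)

theorem norm_sum_le_card_mul {ι E : Type*} [SeminormedAddCommGroup E] (s : Finset ι)
    (f : ι → E) {b : ℝ} (hb : ∀ i ∈ s, ‖f i‖ ≤ b) : ‖∑ i ∈ s, f i‖ ≤ s.card * b := by
  simpa using norm_sum_le_of_le s hb

section NormedRing

variable {A : Type*} [NormedRing A]

theorem norm_lie_le (a b : A) : ‖⁅a, b⁆‖ ≤ 2 * ‖a‖ * ‖b‖ := by
  rw [Ring.lie_def]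
  calc ‖a * b - b * a‖ ≤ ‖a * b‖ + ‖b * a‖ := norm_sub_le _ _
    _ ≤ ‖a‖ * ‖b‖ + ‖b‖ * ‖a‖ := add_le_add (norm_mul_le _ _) (norm_mul_le _ _)
    _ = 2 * ‖a‖ * ‖b‖ := by ring

theorem norm_mul_sub_one_le {a : A} (ha : ‖a‖ ≤ 1) (b : A) : ‖a * b - 1‖ ≤ ‖a - 1‖ + ‖b - 1‖ :=
  calc ‖a * b - 1‖ = ‖a * (b - 1) + (a - 1)‖ := by congr 1; noncomm_ring
    _ ≤ ‖a‖ * ‖b - 1‖ + ‖a - 1‖ := (norm_add_le _ _).trans (by gcongr; exact norm_mul_le _ _)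
    _ ≤ ‖a - 1‖ + ‖b - 1‖ := by nlinarith [norm_nonneg (b - 1)]

theorem norm_mul_mul_sub_le {a : A} (ha : ‖a‖ ≤ 1) (z b : A) :
    ‖a * z * b - z‖ ≤ (‖a - 1‖ + ‖b - 1‖) * ‖z‖ :=
  calc ‖a * z * b - z‖ = ‖a * z * (b - 1) + (a - 1) * z‖ := by congr 1; noncomm_ring
    _ ≤ ‖a‖ * ‖z‖ * ‖b - 1‖ + ‖a - 1‖ * ‖z‖ :=
      (norm_add_le _ _).trans (add_le_add (norm_mul₃_le ..) (norm_mul_le _ _))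
    _ ≤ (‖a - 1‖ + ‖b - 1‖) * ‖z‖ := by
      nlinarith [mul_le_mul_of_nonneg_right ha (mul_nonneg (norm_nonneg z) (norm_nonneg (b - 1)))]

end NormedRing

noncomputable section Exponential

variable {A : Type*} [NormedRing A] [NormedAlgebra ℝ A]

def ExpContractiveOn (X : A) (τ : ℝ) : Prop :=
  ∀ s ∈ Set.Icc (0 : ℝ) τ, ‖exp (s • X)‖ ≤ 1

variable {X Y : A} {τ : ℝ}

theorem ExpContractiveOn.smul (h : ExpContractiveOn X τ) {c : ℝ} (hc₀ : 0 ≤ c) (hc₁ : c ≤ 1) :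
    ExpContractiveOn (c • X) τ := fun s hs => by
  rw [smul_smul]
  exact h _ ⟨mul_nonneg hs.1 hc₀, (mul_le_of_le_one_right hs.1 hc₁).trans hs.2⟩

variable [CompleteSpace A]

theorem ExpContractiveOn.norm_exp_smul_sub_one_le (h : ExpContractiveOn X τ) {u : ℝ}
    (hu : u ∈ Set.Icc 0 τ) : ‖exp (u • X) - 1‖ ≤ u * ‖X‖ := by
  rw [mul_comm]
  simpa using norm_image_sub_le_of_norm_deriv_le_segment' (f := fun s : ℝ => exp (s • X))
    (fun s _ => (hasDerivAt_exp_smul_const X s).hasDerivWithinAt)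
    (fun s hs => (norm_mul_le _ _).trans
      (mul_le_of_le_one_left (norm_nonneg _) (h s ⟨hs.1, hs.2.le.trans hu.2⟩)))
    u (Set.right_mem_Icc.2 hu.1)

theorem hasDerivAt_exp_smul_mul_mul_exp_sub_smul (X Z : A) (t s : ℝ) :
    HasDerivAt (fun s : ℝ => exp (s • X) * Z * exp ((t - s) • X))
      (exp (s • X) * ⁅X, Z⁆ * exp ((t - s) • X)) s := by
  have hright : HasDerivAt (fun s : ℝ => exp ((t - s) • X)) (-(X * exp ((t - s) • X))) s := by
    simpa [Function.comp_def] using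
      (hasDerivAt_exp_smul_const' X (t - s)).scomp s ((hasDerivAt_id s).const_sub t)
  refine (((hasDerivAt_exp_smul_const X s).mul_const Z).mul hright).congr_deriv ?_
  rw [Ring.lie_def]
  noncomm_ring

theorem hasDerivAt_exp_sub_smul_mul {Z : A} {f : ℝ → A} {g : A} {t : ℝ} (τ : ℝ)
    (hf : HasDerivAt f (Z * f t + g) t) :
    HasDerivAt (fun t => exp ((τ - t) • Z) * f t) (exp ((τ - t) • Z) * g) t := by
  have hleft : HasDerivAt (fun t : ℝ => exp ((τ - t) • Z)) (-(exp ((τ - t) • Z) * Z)) t := by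
    simpa [Function.comp_def] using
      (hasDerivAt_exp_smul_const Z (τ - t)).scomp t ((hasDerivAt_id t).const_sub τ)
  refine (hleft.mul hf).congr_deriv ?_
  noncomm_ring

def strangProduct (X Y : A) (t : ℝ) : A := exp (t • X) * exp (t • Y) * exp (t • X)

def strangDefect (X Y : A) (t : ℝ) : A :=
  ⁅exp (t • X), Y⁆ * exp (t • Y) * exp (t • X) + exp (t • X) * ⁅exp (t • Y), X⁆ * exp (t • X)

theorem hasDerivAt_strangProduct (X Y : A) (t : ℝ) :
    HasDerivAt (strangProduct X Y)
      (((2 : ℝ) • X + Y) * strangProduct X Y t + strangDefect X Y t) t := by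
  have hcomm (w : A) : exp (t • X) * (X * w) = X * (exp (t • X) * w) := by
    rw [← mul_assoc, ← ((Commute.refl X).smul_right t).exp_right.eq, mul_assoc]
  refine (((hasDerivAt_exp_smul_const' X t).mul (hasDerivAt_exp_smul_const' Y t)).mul
    (hasDerivAt_exp_smul_const' X t)).congr_deriv ?_
  simp only [strangProduct, strangDefect, Pi.mul_apply, Ring.lie_def, two_smul, add_mul, sub_mul,
    mul_sub, mul_assoc, hcomm]
  abel

theorem norm_strangDefect_deriv_le (hX : ExpContractiveOn X τ) (hY : ExpContractiveOn Y τ)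
    {s t : ℝ} (hs : 0 ≤ s) (hst : s ≤ t) (ht : t ≤ τ) :
    ‖exp (s • X) * ⁅X, Y⁆ * exp ((t - s) • X) * (exp (t • Y) * exp (t • X))
        + exp (t • X) * (exp (s • Y) * ⁅Y, X⁆ * exp ((t - s) • Y)) * exp (t • X)‖
      ≤ 2 * ‖⁅X, Y⁆‖ * (‖X‖ + ‖Y‖) * t := by
  have mem {u : ℝ} (h₀ : 0 ≤ u) (h₁ : u ≤ t) : u ∈ Set.Icc 0 τ := ⟨h₀, h₁.trans ht⟩
  have hs' : s ∈ Set.Icc 0 τ := mem hs hst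
  have hts : t - s ∈ Set.Icc 0 τ := mem (sub_nonneg.2 hst) (sub_le_self _ hs)
  have ht' : t ∈ Set.Icc 0 τ := mem (hs.trans hst) le_rfl
  set D := ⁅X, Y⁆
  have hsplit : exp (s • X) * D * exp ((t - s) • X) * (exp (t • Y) * exp (t • X))
        + exp (t • X) * (exp (s • Y) * ⁅Y, X⁆ * exp ((t - s) • Y)) * exp (t • X)
      = (exp (s • X) * D * (exp ((t - s) • X) * exp (t • Y)) - D
        - (exp (t • X) * exp (s • Y) * D * exp ((t - s) • Y) - D)) * exp (t • X) := by
    simp only [D, Ring.lie_def]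
    noncomm_ring
  have h₁ : ‖exp (s • X) * D * (exp ((t - s) • X) * exp (t • Y)) - D‖
      ≤ t * (‖X‖ + ‖Y‖) * ‖D‖ := by
    refine (norm_mul_mul_sub_le (hX s hs') D _).trans ?_
    gcongr
    linarith [norm_mul_sub_one_le (hX _ hts) (exp (t • Y)), hX.norm_exp_smul_sub_one_le hs',
      hX.norm_exp_smul_sub_one_le hts, hY.norm_exp_smul_sub_one_le ht']
  have h₂ : ‖exp (t • X) * exp (s • Y) * D * exp ((t - s) • Y) - D‖
      ≤ t * (‖X‖ + ‖Y‖) * ‖D‖ := by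
    have hprod : ‖exp (t • X) * exp (s • Y)‖ ≤ 1 :=
      (norm_mul_le _ _).trans (mul_le_one₀ (hX t ht') (norm_nonneg _) (hY s hs'))
    refine (norm_mul_mul_sub_le hprod D _).trans ?_
    gcongr
    linarith [norm_mul_sub_one_le (hX t ht') (exp (s • Y)), hX.norm_exp_smul_sub_one_le ht',
      hY.norm_exp_smul_sub_one_le hs', hY.norm_exp_smul_sub_one_le hts]
  rw [hsplit]
  calc _ ≤ ‖exp (s • X) * D * (exp ((t - s) • X) * exp (t • Y)) - D
          - (exp (t • X) * exp (s • Y) * D * exp ((t - s) • Y) - D)‖ * ‖exp (t • X)‖ :=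
        norm_mul_le _ _
    _ ≤ ‖exp (s • X) * D * (exp ((t - s) • X) * exp (t • Y)) - D
          - (exp (t • X) * exp (s • Y) * D * exp ((t - s) • Y) - D)‖ :=
        mul_le_of_le_one_right (norm_nonneg _) (hX t ht')
    _ ≤ t * (‖X‖ + ‖Y‖) * ‖D‖ + t * (‖X‖ + ‖Y‖) * ‖D‖ := (norm_sub_le _ _).trans (add_le_add h₁ h₂)
    _ = 2 * ‖D‖ * (‖X‖ + ‖Y‖) * t := by ring

theorem norm_strangDefect_le (hX : ExpContractiveOn X τ) (hY : ExpContractiveOn Y τ) {t : ℝ}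
    (ht : t ∈ Set.Icc 0 τ) : ‖strangDefect X Y t‖ ≤ 2 * ‖⁅X, Y⁆‖ * (‖X‖ + ‖Y‖) * t ^ 2 := by
  let h : ℝ → A := fun s => exp (s • X) * Y * exp ((t - s) • X) * (exp (t • Y) * exp (t • X))
      + exp (t • X) * (exp (s • Y) * X * exp ((t - s) • Y)) * exp (t • X)
  have hdefect : strangDefect X Y t = h t - h 0 := by
    simp only [h, strangDefect, Ring.lie_def, sub_self, sub_zero, zero_smul, exp_zero, one_mul,
      mul_one]
    noncomm_ring
  have hderiv (s : ℝ) := ((hasDerivAt_exp_smul_mul_mul_exp_sub_smul X Y t s).mul_const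
      (exp (t • Y) * exp (t • X))).add
    (((hasDerivAt_exp_smul_mul_mul_exp_sub_smul Y X t s).const_mul (exp (t • X))).mul_const
      (exp (t • X)))
  have := norm_image_sub_le_of_norm_deriv_le_segment' (f := h)
    (fun s _ => (hderiv s).hasDerivWithinAt)
    (fun s hs => norm_strangDefect_deriv_le hX hY hs.1 hs.2.le ht.2) t (Set.right_mem_Icc.2 ht.1)
  rw [hdefect]
  linarith

theorem norm_exp_sub_strangProduct_le (hτ : 0 ≤ τ) (hX : ExpContractiveOn X τ)
    (hY : ExpContractiveOn Y τ) (hXY : ExpContractiveOn ((2 : ℝ) • X + Y) τ) :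
    ‖exp (τ • ((2 : ℝ) • X + Y)) - strangProduct X Y τ‖
      ≤ 2 * ‖⁅X, Y⁆‖ * (‖X‖ + ‖Y‖) * τ ^ 3 / 3 := by
  have := norm_sub_le_of_norm_hasDerivAt_le_mul_pow 2 hτ
    (fun t _ => hasDerivAt_exp_sub_smul_mul τ (hasDerivAt_strangProduct X Y t)) fun t ht =>
    (norm_mul_le _ _).trans <| (mul_le_of_le_one_left (norm_nonneg _)
      (hXY _ ⟨sub_nonneg.2 ht.2, sub_le_self _ ht.1⟩)).trans (norm_strangDefect_le hX hY ht)
  simp only [sub_self, sub_zero, zero_smul, exp_zero, one_mul, strangProduct, mul_one] at this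
  rw [norm_sub_rev, strangProduct]
  convert this using 1
  norm_num

theorem norm_exp_add_sub_strang_le {O E : A} (hτ : 0 ≤ τ) (hO : ExpContractiveOn O τ)
    (hE : ExpContractiveOn E τ) (hOE : ExpContractiveOn (O + E) τ) :
    ‖exp (τ • (O + E)) - exp ((τ / 2) • O) * exp (τ • E) * exp ((τ / 2) • O)‖
      ≤ ‖⁅O, E⁆‖ * (‖E‖ + ‖O‖ / 2) * τ ^ 3 / 3 := by
  have hO₂ : (2 : ℝ) • (2⁻¹ : ℝ) • O = O := by rw [smul_smul]; norm_num
  have hexp : exp ((τ / 2) • O) = exp (τ • (2⁻¹ : ℝ) • O) := by rw [smul_smul, div_eq_mul_inv]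
  have hlie : ⁅(2⁻¹ : ℝ) • O, E⁆ = (2⁻¹ : ℝ) • ⁅O, E⁆ := by
    simp only [Ring.lie_def, smul_mul_assoc, mul_smul_comm, smul_sub]
  have hhalf : ‖(2⁻¹ : ℝ)‖ = 2⁻¹ := by norm_num
  have := norm_exp_sub_strangProduct_le hτ (hO.smul (c := 2⁻¹) (by norm_num) (by norm_num)) hE
    (by rwa [hO₂])
  rw [hO₂, strangProduct, hlie, norm_smul, norm_smul, hhalf] at this
  rw [hexp]
  exact this.trans_eq (by ring)

end Exponential

section NearestNeighbor

open Finset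

theorem two_mul_card_filter_even_Icc_le (n : ℕ) : 2 * #{l ∈ Icc 1 n | Even l} ≤ n := by
  have h : #{l ∈ Icc 1 n | Even l} ≤ #(Icc 1 (n / 2)) := card_le_card_of_injOn (· / 2)
    (fun l hl => by simp only [mem_coe, mem_filter, mem_Icc, Nat.even_iff] at hl ⊢; omega)
    (fun l hl m hm hlm => by
      simp only [mem_coe, mem_filter, mem_Icc, Nat.even_iff] at hl hm hlm
      omega)
  rw [Nat.card_Icc] at h
  omega

theorem card_adjacent_odd_even_le (n : ℕ) :
    #{p ∈ {l ∈ Icc 1 n | Odd l} ×ˢ {l ∈ Icc 1 n | Even l} | |(p.1 : ℤ) - p.2| < 2} ≤ n - 1 := by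
  have h : #{p ∈ {l ∈ Icc 1 n | Odd l} ×ˢ {l ∈ Icc 1 n | Even l} | |(p.1 : ℤ) - p.2| < 2}
      ≤ #(Icc 1 (n - 1)) := card_le_card_of_injOn (fun p => min p.1 p.2)
    (fun p hp => by
      simp only [mem_coe, mem_product, mem_filter, mem_Icc, Nat.odd_iff, Nat.even_iff,
        abs_lt] at hp ⊢
      omega)
    (fun p hp q hq hpq => by
      simp only [mem_coe, mem_product, mem_filter, mem_Icc, Nat.odd_iff, Nat.even_iff,
        abs_lt] at hp hq hpq
      exact Prod.ext (by omega) (by omega))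
  rwa [Nat.card_Icc, Nat.add_sub_cancel] at h

variable {A : Type*} [NormedRing A] {n : ℕ} {K : ℕ → A} {b : ℝ}

theorem norm_sum_even_add_half_norm_sum_odd_le (hb : ∀ l ∈ Icc 1 n, ‖K l‖ ≤ b) (hb0 : 0 ≤ b) :
    ‖∑ l ∈ Icc 1 n with Even l, K l‖ + ‖∑ l ∈ Icc 1 n with Odd l, K l‖ / 2 ≤ 3 * n / 4 * b := by
  have hE := norm_sum_le_card_mul {l ∈ Icc 1 n | Even l} K fun l hl => hb l (mem_filter.1 hl).1
  have hO := norm_sum_le_card_mul {l ∈ Icc 1 n | Odd l} K fun l hl => hb l (mem_filter.1 hl).1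
  have hcard : #{l ∈ Icc 1 n | Even l} + #{l ∈ Icc 1 n | Odd l} = n := by
    simpa [Nat.not_even_iff_odd] using card_filter_add_card_filter_not (s := Icc 1 n) (Even ·)
  have hcard' : (#{l ∈ Icc 1 n | Even l} + #{l ∈ Icc 1 n | Odd l} : ℝ) = n := by
    exact_mod_cast hcard
  have heven : (2 * #{l ∈ Icc 1 n | Even l} : ℝ) ≤ n := by
    exact_mod_cast two_mul_card_filter_even_Icc_le n
  nlinarith

theorem norm_lie_sum_odd_sum_even_le (hn : 1 ≤ n) (hb : ∀ l ∈ Icc 1 n, ‖K l‖ ≤ b)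
    (hcomm : ∀ i ∈ Icc 1 n, ∀ j ∈ Icc 1 n, 2 ≤ |(i : ℤ) - j| → K i * K j = K j * K i) :
    ‖⁅∑ l ∈ Icc 1 n with Odd l, K l, ∑ l ∈ Icc 1 n with Even l, K l⁆‖ ≤ 2 * (n - 1) * b ^ 2 := by
  set T := {p ∈ {l ∈ Icc 1 n | Odd l} ×ˢ {l ∈ Icc 1 n | Even l} | |(p.1 : ℤ) - p.2| < 2}
  have hsum : ⁅∑ l ∈ Icc 1 n with Odd l, K l, ∑ l ∈ Icc 1 n with Even l, K l⁆
      = ∑ p ∈ T, ⁅K p.1, K p.2⁆ := by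
    let := LieRing.ofAssociativeRing (A := A)
    rw [sum_lie_sum, ← sum_product', sum_filter_of_ne]
    intro p hp hne
    by_contra! hfar
    simp only [mem_product, mem_filter] at hp
    exact hne (by rw [Ring.lie_def, hcomm _ hp.1.1 _ hp.2.1 hfar, sub_self])
  have hT : (#T : ℝ) ≤ n - 1 := by
    have h : #T ≤ n - 1 := card_adjacent_odd_even_le n
    rw [← Nat.cast_one, ← Nat.cast_sub hn]
    exact_mod_cast h
  have hterm : ∀ p ∈ T, ‖⁅K p.1, K p.2⁆‖ ≤ 2 * b ^ 2 := by
    intro p hp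
    simp only [T, mem_filter, mem_product] at hp
    calc ‖⁅K p.1, K p.2⁆‖ ≤ 2 * ‖K p.1‖ * ‖K p.2‖ := norm_lie_le _ _
      _ ≤ 2 * b * b := by
        have hb0 : 0 ≤ b := (norm_nonneg _).trans (hb _ hp.1.1.1)
        gcongr
        exacts [hb _ hp.1.1.1, hb _ hp.1.2.1]
      _ = 2 * b ^ 2 := by ring
  rw [hsum]
  calc ‖∑ p ∈ T, ⁅K p.1, K p.2⁆‖ ≤ #T * (2 * b ^ 2) := norm_sum_le_card_mul T _ hterm
    _ ≤ (n - 1) * (2 * b ^ 2) := by gcongr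
    _ = 2 * (n - 1) * b ^ 2 := by ring

end NearestNeighbor

theorem trotter_one_step_nearest_neighbor_bound_general {A : Type*} [NormedRing A]
    [NormedAlgebra ℂ A] [CompleteSpace A] (N : ℕ) (hN : 2 ≤ N) (K : ℕ → A) (b : ℝ)
    (hb : ∀ l ∈ Finset.Icc 1 (N - 1), ‖K l‖ ≤ b)
    (hcomm : ∀ i ∈ Finset.Icc 1 (N - 1), ∀ j ∈ Finset.Icc 1 (N - 1),
      2 ≤ |(i : ℤ) - (j : ℤ)| → K i * K j = K j * K i)
    (O E : A)
    (hO : O = ∑ l ∈ (Finset.Icc 1 (N - 1)).filter (fun l => Odd l), K l)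
    (hE : E = ∑ l ∈ (Finset.Icc 1 (N - 1)).filter (fun l => Even l), K l)
    (τ : ℝ) (hτ : 0 ≤ τ)
    (hOexp : ∀ s ∈ Set.Icc (0:ℝ) τ, ‖exp (s • O)‖ ≤ 1)
    (hEexp : ∀ s ∈ Set.Icc (0:ℝ) τ, ‖exp (s • E)‖ ≤ 1)
    (hOEexp : ∀ s ∈ Set.Icc (0:ℝ) τ, ‖exp (s • (O + E))‖ ≤ 1) :
    ‖exp (τ • (O + E)) -
        exp ((τ / 2) • O) * exp (τ • E) * exp ((τ / 2) • O)‖ ≤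
      τ ^ 3 * (N : ℝ) ^ 2 * b ^ 3 / 2 := by
  have hb0 : 0 ≤ b := (norm_nonneg _).trans (hb 1 (Finset.mem_Icc.2 ⟨le_rfl, by omega⟩))
  have hcast : ((N - 1 : ℕ) : ℝ) = N - 1 := by rw [Nat.cast_sub (by omega), Nat.cast_one]
  have hlie : ‖⁅O, E⁆‖ ≤ 2 * (N - 2) * b ^ 2 := by
    have := norm_lie_sum_odd_sum_even_le (by omega) hb hcomm
    rw [hcast] at this
    rw [hO, hE]
    linarith
  have hnorm : ‖E‖ + ‖O‖ / 2 ≤ 3 * (N - 1) / 4 * b := by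
    have := norm_sum_even_add_half_norm_sum_odd_le hb hb0
    rwa [hcast, ← hO, ← hE] at this
  have hN₂ : (0 : ℝ) ≤ N - 2 := by rw [sub_nonneg]; exact_mod_cast hN
  calc _ ≤ ‖⁅O, E⁆‖ * (‖E‖ + ‖O‖ / 2) * τ ^ 3 / 3 :=
        norm_exp_add_sub_strang_le hτ hOexp hEexp hOEexp
    _ ≤ 2 * (N - 2) * b ^ 2 * (3 * (N - 1) / 4 * b) * τ ^ 3 / 3 := by gcongr
    _ = (N - 2) * (N - 1) * (τ ^ 3 * b ^ 3) / 2 := by ring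
    _ ≤ N ^ 2 * (τ ^ 3 * b ^ 3) / 2 := by gcongr; nlinarith
    _ = τ ^ 3 * N ^ 2 * b ^ 3 / 2 := by ring

/-- **One-step second-order Trotter–Suzuki error for a nearest-neighbor
Liouvillian** (proof of Theorem 1). If `K₁, …, K_{N−1}` are elements of a
complex Banach algebra with `‖Kₗ‖ ≤ b` that commute whenever `|i − j| ≥ 2`,
`O` and `E` are the odd and even parts, `τ ≥ 0` satisfies
`τ(‖E‖ + ‖O‖/2) ≤ 1`, and the exponentials `exp(sO)`, `exp(sE)`,
`exp(s(O+E))` are contractions for `s ∈ [0,τ]`, then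
`‖exp(τ(O+E)) − exp((τ/2)O)·exp(τE)·exp((τ/2)O)‖ ≤ τ³N²b³/2`. -/
theorem trotter_one_step_nearest_neighbor_bound {A : Type*} [NormedRing A]
    [NormedAlgebra ℂ A] [CompleteSpace A] (N : ℕ) (hN : 2 ≤ N) (K : ℕ → A) (b : ℝ)
    (hb : ∀ l ∈ Finset.Icc 1 (N - 1), ‖K l‖ ≤ b)
    (hcomm : ∀ i ∈ Finset.Icc 1 (N - 1), ∀ j ∈ Finset.Icc 1 (N - 1),
      2 ≤ |(i : ℤ) - (j : ℤ)| → K i * K j = K j * K i)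
    (O E : A)
    (hO : O = ∑ l ∈ (Finset.Icc 1 (N - 1)).filter (fun l => Odd l), K l)
    (hE : E = ∑ l ∈ (Finset.Icc 1 (N - 1)).filter (fun l => Even l), K l)
    (τ : ℝ) (hτ : 0 ≤ τ) (hτ' : τ * (‖E‖ + ‖O‖ / 2) ≤ 1)
    (hOexp : ∀ s ∈ Set.Icc (0:ℝ) τ, ‖exp (s • O)‖ ≤ 1)
    (hEexp : ∀ s ∈ Set.Icc (0:ℝ) τ, ‖exp (s • E)‖ ≤ 1)
    (hOEexp : ∀ s ∈ Set.Icc (0:ℝ) τ, ‖exp (s • (O + E))‖ ≤ 1) :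
    ‖exp (τ • (O + E)) -
        exp ((τ / 2) • O) * exp (τ • E) * exp ((τ / 2) • O)‖ ≤
      τ ^ 3 * (N : ℝ) ^ 2 * b ^ 3 / 2 :=
  trotter_one_step_nearest_neighbor_bound_general N hN K b hb hcomm O E hO hE τ hτ hOexp hEexp
    hOEexp
end
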